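/- A 2-dimensional irreducible representation φ = I(ℓ) ⊗ |·|^{-w/2} of W_ℝ (ℓ ≥ 1) preserves, up to the similitude character sgn^w |·|^{-w}, a nondegenerate skew-symmetric bilinear form on its underlying space, and any nonzero bilinear form with this equivariance is skew-symmetric (hence φ does not preserve any nonzero symmetric form with the same similitude character). -/

import Mathlib

/-- The explicit model of `φ = I(ℓ) ⊗ |·|^{-w/2}` on `ℂ²`: on `ℂˣ` it acts by
`diag((z/r)^ℓ r^{-w}, (z̄/r)^ℓ r^{-w})` and on `j` by `[[0,(-1)^ℓ],[1,0]]`. -/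
noncomputable def weilRhoZ (ℓ : ℕ) (w : ℤ) (z : ℂ) : Matrix (Fin 2) (Fin 2) ℂ :=
  Matrix.diagonal
    ![(z / ‖z‖) ^ ℓ * ((‖z‖ : ℂ)) ^ (-w),
      ((starRingEnd ℂ) z / ‖z‖) ^ ℓ * ((‖z‖ : ℂ)) ^ (-w)]

noncomputable def weilRhoJ (ℓ : ℕ) : Matrix (Fin 2) (Fin 2) ℂ :=
  !![(0 : ℂ), (-1 : ℂ) ^ ℓ; 1, 0]

/-!
Since `φ` is two-dimensional, `∧²φ = det φ`: the determinant form with Gram matrix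
`S = !![0, 1; -1, 0]` satisfies `Aᵀ S A = det A • S` for every `A`, and `det φ` is exactly the
similitude character (on `j` this is where `ℓ ≡ w + 1 (mod 2)` enters).

Conversely, equivariance of a form with Gram matrix `M` reads `Aᵀ M A = η • M`. A `z` with
`|z| = 1` and `z ^ ℓ = i` acts by `diag(i, -i)` with `η(z) = 1`, which kills the diagonal of `M`,
and the `(0, 1)` entry of the `j`-equation gives `M 1 0 = -M 0 1`.
-/

open Matrix

namespace LinearMap

variable {R n : Type*} [CommRing R] [Fintype n] [DecidableEq n]

theorem toMatrix₂'_flip (B : (n → R) →ₗ[R] (n → R) →ₗ[R] R) :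
    toMatrix₂' R B.flip = (toMatrix₂' R B)ᵀ := by
  ext i j
  simp only [toMatrix₂'_apply, flip_apply, transpose_apply]

theorem forall_apply_eq_neg_apply_iff_transpose_toMatrix₂'
    (B : (n → R) →ₗ[R] (n → R) →ₗ[R] R) :
    (∀ u v, B u v = -B v u) ↔ (toMatrix₂' R B)ᵀ = -toMatrix₂' R B := by
  rw [← neg_eq_iff_eq_neg, ← toMatrix₂'_flip, ← map_neg, (toMatrix₂' R).injective.eq_iff,
    LinearMap.ext_iff₂]
  simp only [neg_apply, flip_apply]
  exact forall₂_congr fun _ _ => eq_comm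

theorem forall_apply_mulVec_mulVec_eq_iff_toMatrix₂'
    (B : (n → R) →ₗ[R] (n → R) →ₗ[R] R) (A : Matrix n n R) (c : R) :
    (∀ u v, B (A *ᵥ u) (A *ᵥ v) = c * B u v) ↔
      Aᵀ * toMatrix₂' R B * A = c • toMatrix₂' R B := by
  rw [← toMatrix'_toLin' A, ← toMatrix₂'_compl₁₂, ← map_smul,
    (toMatrix₂' R).injective.eq_iff, LinearMap.ext_iff₂]
  simp only [compl₁₂_apply, toLin'_apply, smul_apply, smul_eq_mul, toMatrix'_toLin']

end LinearMap

namespace Matrix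

variable {R n : Type*} [CommRing R] [Fintype n] [DecidableEq n]

theorem transpose_mul_mul_fin_two_symplectic (A : Matrix (Fin 2) (Fin 2) R) :
    Aᵀ * !![0, 1; -1, 0] * A = A.det • !![0, 1; -1, 0] := by
  ext i j
  fin_cases i <;> fin_cases j <;>
    simp [det_fin_two, mul_apply, Fin.sum_univ_two] <;> ring

theorem apply_eq_zero_of_diagonal_transpose_mul_mul_diagonal [IsDomain R] {d : n → R}
    {M : Matrix n n R} {c : R} (h : (diagonal d)ᵀ * M * diagonal d = c • M) {i j : n}
    (hij : d i * d j ≠ c) : M i j = 0 := by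
  have hentry := congrFun (congrFun h i) j
  simp only [diagonal_transpose, diagonal_mul, mul_diagonal, smul_apply, smul_eq_mul] at hentry
  have : (d i * d j - c) * M i j = 0 := by linear_combination hentry
  exact (mul_eq_zero.mp this).resolve_left (sub_ne_zero.mpr hij)

end Matrix

open Complex in
theorem exists_norm_eq_one_and_pow_eq_I {ℓ : ℕ} (hℓ : 0 < ℓ) :
    ∃ z : ℂ, ‖z‖ = 1 ∧ z ^ ℓ = I := by
  obtain ⟨z, hz⟩ := IsAlgClosed.exists_pow_nat_eq I hℓ
  refine ⟨z, ?_, hz⟩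
  rw [← pow_eq_one_iff_of_nonneg (norm_nonneg z) hℓ.ne', ← norm_pow, hz, norm_I]

theorem neg_one_pow_eq_neg_neg_one_zpow {K : Type*} [DivisionRing K] {ℓ : ℕ} {w : ℤ}
    (hpar : (ℓ : ℤ) ≡ w + 1 [ZMOD 2]) : (-1 : K) ^ ℓ = -(-1 : K) ^ w := by
  obtain ⟨k, hk⟩ := hpar.dvd
  have hne : (-1 : K) ≠ 0 := neg_ne_zero.mpr one_ne_zero
  calc (-1 : K) ^ ℓ = (-1 : K) ^ (w + 1 + (-2) * k) := by
        rw [← zpow_natCast]; congr 1; linarith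
    _ = (-1 : K) ^ w * (-1) ^ (1 : ℤ) * ((-1) ^ (-2 : ℤ)) ^ k := by
        rw [zpow_add₀ hne, zpow_add₀ hne, _root_.zpow_mul]
    _ = -(-1 : K) ^ w := by norm_num

theorem det_weilRhoZ (ℓ : ℕ) (w : ℤ) {z : ℂ} (hz : z ≠ 0) :
    (weilRhoZ ℓ w z).det = ((‖z‖ : ℂ) ^ 2) ^ (-w) := by
  have hr : (‖z‖ : ℂ) ≠ 0 := by exact_mod_cast norm_ne_zero_iff.mpr hz
  have hunit : z / ‖z‖ * (starRingEnd ℂ z / ‖z‖) = 1 := by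
    rw [div_mul_div_comm, Complex.mul_conj, Complex.normSq_eq_norm_sq]
    push_cast
    field_simp
  rw [weilRhoZ, det_diagonal, Fin.prod_univ_two]
  calc _ = (z / ‖z‖ * (starRingEnd ℂ z / ‖z‖)) ^ ℓ * ((‖z‖ : ℂ) ^ (-w)) ^ 2 := by
        simp only [cons_val_zero, cons_val_one]
        ring
    _ = ((‖z‖ : ℂ) ^ 2) ^ (-w) := by
        rw [hunit, one_pow, one_mul, ← zpow_natCast, ← zpow_natCast, ← _root_.zpow_mul,
          ← _root_.zpow_mul, mul_comm]

theorem det_weilRhoJ {ℓ : ℕ} {w : ℤ} (hpar : (ℓ : ℤ) ≡ w + 1 [ZMOD 2]) :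
    (weilRhoJ ℓ).det = (-1) ^ w := by
  simp [weilRhoJ, det_fin_two_of, neg_one_pow_eq_neg_neg_one_zpow hpar]

theorem weilRhoZ_eq_diagonal_of_pow_eq_I (ℓ : ℕ) (w : ℤ) {z : ℂ} (hnorm : ‖z‖ = 1)
    (hpow : z ^ ℓ = Complex.I) : weilRhoZ ℓ w z = diagonal ![Complex.I, -Complex.I] := by
  simp [weilRhoZ, hnorm, ← map_pow, hpow]

theorem transpose_weilRhoJ_mul_mul_apply_zero_one (ℓ : ℕ) (M : Matrix (Fin 2) (Fin 2) ℂ) :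
    ((weilRhoJ ℓ)ᵀ * M * weilRhoJ ℓ) 0 1 = (-1) ^ ℓ * M 1 0 := by
  simp [weilRhoJ, mul_apply, Fin.sum_univ_two, mul_comm]

theorem toLinearMap₂'_fin_two_symplectic_mulVec_mulVec {R : Type*} [CommRing R]
    (A : Matrix (Fin 2) (Fin 2) R) (u v : Fin 2 → R) :
    toLinearMap₂' R !![0, 1; -1, 0] (A *ᵥ u) (A *ᵥ v) =
      A.det * toLinearMap₂' R !![0, 1; -1, 0] u v := by
  refine (LinearMap.forall_apply_mulVec_mulVec_eq_iff_toMatrix₂' _ A _).mpr ?_ u v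
  rw [LinearMap.toMatrix'_toLinearMap₂', transpose_mul_mul_fin_two_symplectic]

theorem forall_apply_eq_neg_apply_of_weil_similitude {ℓ : ℕ} (hℓ : 0 < ℓ) {w : ℤ}
    (hpar : (ℓ : ℤ) ≡ w + 1 [ZMOD 2]) (B : (Fin 2 → ℂ) →ₗ[ℂ] (Fin 2 → ℂ) →ₗ[ℂ] ℂ)
    (hZ : ∀ z : ℂ, z ≠ 0 → ∀ u v,
      B ((weilRhoZ ℓ w z).mulVec u) ((weilRhoZ ℓ w z).mulVec v)
        = ((‖z‖ : ℂ) ^ 2) ^ (-w) * B u v)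
    (hJ : ∀ u v, B ((weilRhoJ ℓ).mulVec u) ((weilRhoJ ℓ).mulVec v) = (-1 : ℂ) ^ w * B u v) :
    ∀ u v, B u v = -B v u := by
  obtain ⟨z, hnorm, hpow⟩ := exists_norm_eq_one_and_pow_eq_I hℓ
  have hz : z ≠ 0 := norm_ne_zero_iff.mp (hnorm ▸ one_ne_zero)
  set M := LinearMap.toMatrix₂' ℂ B
  have hMZ : (diagonal ![Complex.I, -Complex.I])ᵀ * M * diagonal ![Complex.I, -Complex.I]
      = (1 : ℂ) • M := by
    have h := (LinearMap.forall_apply_mulVec_mulVec_eq_iff_toMatrix₂' B _ _).mp (hZ z hz)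
    rwa [weilRhoZ_eq_diagonal_of_pow_eq_I ℓ w hnorm hpow, hnorm, Complex.ofReal_one, one_pow,
      _root_.one_zpow] at h
  have hMJ := (LinearMap.forall_apply_mulVec_mulVec_eq_iff_toMatrix₂' B _ _).mp hJ
  have h00 : M 0 0 = 0 := apply_eq_zero_of_diagonal_transpose_mul_mul_diagonal hMZ (by norm_num)
  have h11 : M 1 1 = 0 := apply_eq_zero_of_diagonal_transpose_mul_mul_diagonal hMZ (by norm_num)
  have h10 : M 1 0 = -M 0 1 := by
    have h := congrFun (congrFun hMJ 0) 1
    rw [transpose_weilRhoJ_mul_mul_apply_zero_one, neg_one_pow_eq_neg_neg_one_zpow hpar,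
      Matrix.smul_apply, smul_eq_mul] at h
    exact mul_left_cancel₀ (zpow_ne_zero w (neg_ne_zero.mpr one_ne_zero))
      (by linear_combination -h)
  rw [LinearMap.forall_apply_eq_neg_apply_iff_transpose_toMatrix₂']
  ext i j
  fin_cases i <;> fin_cases j <;> simp [M, h00, h11, h10]

/-- For `ℓ ≡ w+1 (mod 2)`, the representation `I(ℓ) ⊗ |·|^{-w/2}` of `W_ℝ`
preserves, with similitude character `sgn^w|·|^{-w}` (value `(r²)^{-w}` on `z ∈ ℂˣ`
and `(-1)^w` on `j`), a nonzero nondegenerate skew-symmetric bilinear form, and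
every bilinear form with this equivariance is skew-symmetric. -/
theorem stmt7 (ℓ : ℕ) (hℓ : 1 ≤ ℓ) (w : ℤ) (hpar : (ℓ : ℤ) ≡ w + 1 [ZMOD 2]) :
    (∃ B : (Fin 2 → ℂ) →ₗ[ℂ] (Fin 2 → ℂ) →ₗ[ℂ] ℂ,
      B ≠ 0 ∧ (∀ u, (∀ v, B u v = 0) → u = 0) ∧ (∀ u v, B u v = - B v u) ∧
      (∀ z : ℂ, z ≠ 0 → ∀ u v,
        B ((weilRhoZ ℓ w z).mulVec u) ((weilRhoZ ℓ w z).mulVec v)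
          = ((‖z‖ : ℂ) ^ 2) ^ (-w) * B u v) ∧
      (∀ u v, B ((weilRhoJ ℓ).mulVec u) ((weilRhoJ ℓ).mulVec v) = (-1 : ℂ) ^ w * B u v)) ∧
    (∀ B : (Fin 2 → ℂ) →ₗ[ℂ] (Fin 2 → ℂ) →ₗ[ℂ] ℂ,
      (∀ z : ℂ, z ≠ 0 → ∀ u v,
        B ((weilRhoZ ℓ w z).mulVec u) ((weilRhoZ ℓ w z).mulVec v)
          = ((‖z‖ : ℂ) ^ 2) ^ (-w) * B u v) →
      (∀ u v, B ((weilRhoJ ℓ).mulVec u) ((weilRhoJ ℓ).mulVec v) = (-1 : ℂ) ^ w * B u v) →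
      ∀ u v, B u v = - B v u) := by
  set S : Matrix (Fin 2) (Fin 2) ℂ := !![0, 1; -1, 0]
  have hdetS : S.det = 1 := by simp [S, det_fin_two_of]
  refine ⟨⟨toLinearMap₂' ℂ S, ?_, ?_, ?_, ?_, ?_⟩,
    forall_apply_eq_neg_apply_of_weil_similitude hℓ hpar⟩
  · refine (LinearEquiv.map_ne_zero_iff _).mpr fun hS => ?_
    simp [hS] at hdetS
  · exact LinearMap.separatingLeft_toLinearMap₂'_iff_det_ne_zero.mpr (by simp [hdetS])
  · rw [LinearMap.forall_apply_eq_neg_apply_iff_transpose_toMatrix₂',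
      LinearMap.toMatrix'_toLinearMap₂']
    ext i j
    fin_cases i <;> fin_cases j <;> simp [S]
  · intro z hz u v
    rw [← det_weilRhoZ ℓ w hz]
    exact toLinearMap₂'_fin_two_symplectic_mulVec_mulVec _ u v
  · intro u v
    rw [← det_weilRhoJ hpar]
    exact toLinearMap₂'_fin_two_symplectic_mulVec_mulVec _ u v
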